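/- For parameters a, c, c' with c, c' not nonpositive integers and any β ∈ ℂ, the double series rearrangement F⁻(x) := Σ_{n≥0} Σ_{k=0}^{n} (c−a−n)_k (1−a−n)_k / ((c')_n n! k!) · β^n x^{−k} equals Σ_{k≥0} ₃F₄[1, a+k, a−c+1+k; a, a−c+1, 1+k, c'+k; β] · (a)_k (a−c+1)_k / ((c')_k (k!)²) · β^k x^{−k}, whenever both series converge absolutely (e.g. |x| > 1 and β fixed, with a, a−c+1 ∉ ℤ_{≤0}). -/
import Mathlib


open Complex Finset

/-- Pochhammer symbol (rising factorial) on `ℂ`. -/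
noncomputable def poch (a : ℂ) (n : ℕ) : ℂ := (ascPochhammer ℂ n).eval a

lemma poch_zero (a : ℂ) : poch a 0 = 1 := by simp [poch]

lemma poch_succ (a : ℂ) (n : ℕ) : poch a (n+1) = poch a n * (a + n) := by
  simp [poch, ascPochhammer_succ_right]

lemma poch_add (a : ℂ) (n m : ℕ) : poch a (n + m) = poch a n * poch (a + n) m := by
  have := congrArg (Polynomial.eval a) (ascPochhammer_mul (S := ℂ) n m)
  simpa [poch, Polynomial.eval_comp] using this.symm

lemma poch_one (m : ℕ) : poch 1 m = (m.factorial : ℂ) := by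
  simp [poch]

lemma poch_nat_one (k m : ℕ) : (k.factorial : ℂ) * poch (1 + k) m = ((k + m).factorial : ℂ) := by
  have := poch_add 1 k m
  rw [poch_one, poch_one] at this
  rw [← this]

lemma poch_ne_zero {a : ℂ} (h : ∀ n : ℕ, a ≠ -n) (n : ℕ) : poch a n ≠ 0 := by
  induction n with
  | zero => simp [poch_zero]
  | succ n ih =>
    rw [poch_succ]
    refine mul_ne_zero ih ?_
    intro hz
    exact h n (by linear_combination hz)

lemma poch_reflect (k : ℕ) : ∀ x : ℂ, poch x k = (-1)^k * poch (1 - x - k) k := by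
  induction k with
  | zero => simp [poch_zero]
  | succ k ih =>
    intro x
    have h1 : poch (1 - x - (k+1 : ℕ)) (k+1) = (1 - x - (k+1:ℕ)) * poch (1 - x - k) k := by
      have := poch_add (1 - x - (k+1:ℕ)) 1 k
      simp only [poch_succ, poch_zero] at this
      rw [show (1:ℕ) + k = k + 1 from by ring] at this
      rw [this]
      push_cast
      ring_nf
    rw [poch_succ, ih x, h1]
    push_cast
    ring

lemma term_eq (a c c' β x : ℂ)
    (hc' : ∀ n : ℕ, c' ≠ -n) (ha : ∀ n : ℕ, a ≠ -n) (hac : ∀ n : ℕ, a - c + 1 ≠ -n)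
    (k m : ℕ) :
    poch (c - a - ((k + m : ℕ) : ℂ)) k * poch (1 - a - ((k + m : ℕ) : ℂ)) k /
      (poch c' (k + m) * (Nat.factorial (k + m) : ℂ) * (Nat.factorial k : ℂ)) *
      β ^ (k + m) * x⁻¹ ^ k
    = (poch 1 m * poch (a + k) m * poch (a - c + 1 + k) m /
        (poch a m * poch (a - c + 1) m * poch (1 + k) m * poch (c' + k) m *
          (Nat.factorial m : ℂ)) * β ^ m) *
      (poch a k * poch (a - c + 1) k / (poch c' k * (Nat.factorial k : ℂ) ^ 2) *
        β ^ k * x⁻¹ ^ k) := by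
  have hsign : ((-1 : ℂ) ^ k) * (-1 : ℂ) ^ k = 1 := by
    rw [← pow_add]; exact Even.neg_one_pow ⟨k, rfl⟩
  have hA : poch (c - a - ((k + m : ℕ) : ℂ)) k = (-1 : ℂ) ^ k * poch (a - c + 1 + m) k := by
    have harg : (1 : ℂ) - (c - a - ((k + m : ℕ) : ℂ)) - (k : ℕ) = a - c + 1 + m := by
      push_cast; ring
    rw [poch_reflect, harg]
  have hB : poch (1 - a - ((k + m : ℕ) : ℂ)) k = (-1 : ℂ) ^ k * poch (a + m) k := by
    have harg : (1 : ℂ) - (1 - a - ((k + m : ℕ) : ℂ)) - (k : ℕ) = a + m := by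
      push_cast; ring
    rw [poch_reflect, harg]
  have hAB : poch (c - a - ((k + m : ℕ) : ℂ)) k * poch (1 - a - ((k + m : ℕ) : ℂ)) k
      = poch (a - c + 1 + m) k * poch (a + m) k := by
    rw [hA, hB]
    linear_combination (poch (a - c + 1 + (m:ℂ)) k * poch (a + (m:ℂ)) k) * hsign
  have hE : poch c' (k + m) = poch c' k * poch (c' + k) m := poch_add c' k m
  have hF : (Nat.factorial (k + m) : ℂ) = (Nat.factorial k : ℂ) * poch (1 + k) m :=
    (poch_nat_one k m).symm
  have key1 : poch (a + m) k * poch a m = poch a k * poch (a + k) m := by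
    have h1 := poch_add a m k
    have h2 := poch_add a k m
    rw [show m + k = k + m from add_comm m k] at h1
    linear_combination h2 - h1
  have key2 : poch (a - c + 1 + m) k * poch (a - c + 1) m
      = poch (a - c + 1) k * poch (a - c + 1 + k) m := by
    have h1 := poch_add (a - c + 1) m k
    have h2 := poch_add (a - c + 1) k m
    rw [show m + k = k + m from add_comm m k] at h1
    linear_combination h2 - h1
  have hpa : poch a m ≠ 0 := poch_ne_zero ha m
  have hpb : poch (a - c + 1) m ≠ 0 := poch_ne_zero hac m
  have hpck : poch c' k ≠ 0 := poch_ne_zero hc' k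
  have hpckm : poch (c' + k) m ≠ 0 := by
    refine poch_ne_zero (fun n hn => hc' (n + k) ?_) m
    push_cast; linear_combination hn
  have hp1k : poch (1 + (k : ℂ)) m ≠ 0 := by
    intro hz
    have := poch_nat_one k m
    rw [hz, mul_zero] at this
    exact (Nat.cast_ne_zero.mpr (Nat.factorial_ne_zero (k + m))) this.symm
  have hfk : (Nat.factorial k : ℂ) ≠ 0 := Nat.cast_ne_zero.mpr (Nat.factorial_ne_zero k)
  have hfm : (Nat.factorial m : ℂ) ≠ 0 := Nat.cast_ne_zero.mpr (Nat.factorial_ne_zero m)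
  rw [hAB, hE, hF, poch_one, pow_add]
  rw [div_mul_eq_mul_div, div_mul_eq_mul_div, div_mul_eq_mul_div, div_mul_eq_mul_div,
    div_mul_eq_mul_div, div_mul_eq_mul_div, ← mul_div_assoc, div_div, div_eq_div_iff
    (mul_ne_zero (mul_ne_zero (mul_ne_zero hpck hpckm) (mul_ne_zero hfk hp1k)) hfk)
    (mul_ne_zero (mul_ne_zero hpck (pow_ne_zero 2 hfk)) (mul_ne_zero (mul_ne_zero
      (mul_ne_zero (mul_ne_zero hpa hpb) hp1k) hpckm) hfm))]
  linear_combination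
    (poch c' k * (Nat.factorial k : ℂ)^2 * poch (1 + (k:ℂ)) m * poch (c' + (k:ℂ)) m *
      (Nat.factorial m : ℂ) * β ^ k * β ^ m * x⁻¹ ^ k * poch (a + (m:ℂ)) k * poch a m) * key2 +
    (poch c' k * (Nat.factorial k : ℂ)^2 * poch (1 + (k:ℂ)) m * poch (c' + (k:ℂ)) m *
      (Nat.factorial m : ℂ) * β ^ k * β ^ m * x⁻¹ ^ k * poch (a - c + 1) k *
      poch (a - c + 1 + (k:ℂ)) m) * key1

/-- Generalized hypergeometric function `₃F₄`. -/
noncomputable def F34 (a₁ a₂ a₃ b₁ b₂ b₃ b₄ z : ℂ) : ℂ :=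
  ∑' m : ℕ, poch a₁ m * poch a₂ m * poch a₃ m /
    (poch b₁ m * poch b₂ m * poch b₃ m * poch b₄ m * (Nat.factorial m : ℂ)) * z ^ m

/-- Double-series rearrangement:
`Σ_{n≥0} Σ_{k=0}^n (c−a−n)_k (1−a−n)_k/((c')_n n! k!) β^n x^{−k}
 = Σ_{k≥0} ₃F₄[1,a+k,a−c+1+k;a,a−c+1,1+k,c'+k;β] (a)_k(a−c+1)_k/((c')_k (k!)²) β^k x^{−k}`,
assuming both series converge absolutely. -/
theorem psi2_series_rearrangement (a c c' β x : ℂ)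
    (hc : ∀ n : ℕ, c ≠ -n) (hc' : ∀ n : ℕ, c' ≠ -n)
    (ha : ∀ n : ℕ, a ≠ -n) (hac : ∀ n : ℕ, a - c + 1 ≠ -n)
    (hx : 1 < ‖x‖)
    (hL : Summable fun n : ℕ => ∑ k ∈ Finset.range (n + 1),
      ‖poch (c - a - n) k * poch (1 - a - n) k /
        (poch c' n * (Nat.factorial n : ℂ) * (Nat.factorial k : ℂ)) *
        β ^ n * x⁻¹ ^ k‖)
    (hR : Summable fun k : ℕ =>
      ‖F34 1 (a + k) (a - c + 1 + k) a (a - c + 1) (1 + k) (c' + k) β *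
        (poch a k * poch (a - c + 1) k /
          (poch c' k * (Nat.factorial k : ℂ) ^ 2)) * β ^ k * x⁻¹ ^ k‖) :
    (∑' n : ℕ, ∑ k ∈ Finset.range (n + 1),
        poch (c - a - n) k * poch (1 - a - n) k /
          (poch c' n * (Nat.factorial n : ℂ) * (Nat.factorial k : ℂ)) *
          β ^ n * x⁻¹ ^ k)
      = ∑' k : ℕ,
          F34 1 (a + k) (a - c + 1 + k) a (a - c + 1) (1 + k) (c' + k) β *
            (poch a k * poch (a - c + 1) k /
              (poch c' k * (Nat.factorial k : ℂ) ^ 2)) * β ^ k * x⁻¹ ^ k := by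
  classical
  set f : ℕ → ℕ → ℂ := fun n k => poch (c - a - n) k * poch (1 - a - n) k /
      (poch c' n * (Nat.factorial n : ℂ) * (Nat.factorial k : ℂ)) * β ^ n * x⁻¹ ^ k with hf
  set F : ℕ × ℕ → ℂ := fun p => if p.2 ≤ p.1 then f p.1 p.2 else 0 with hFdef
  have hFzero : ∀ n : ℕ, ∀ k ∉ Finset.range (n + 1), F (n, k) = 0 := by
    intro n k hk
    simp only [Finset.mem_range, Nat.lt_succ_iff, not_le] at hk
    simp only [hFdef]
    rw [if_neg (by omega)]
  have hrow : ∀ n : ℕ, ∑ k ∈ Finset.range (n + 1), f n k = ∑' k, F (n, k) := by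
    intro n
    rw [tsum_eq_sum (hFzero n)]
    refine Finset.sum_congr rfl fun k hk => ?_
    simp only [Finset.mem_range, Nat.lt_succ_iff] at hk
    simp [hFdef, hk]
  have hrowinner : ∀ n : ℕ, Summable fun k => F (n, k) :=
    fun n => summable_of_ne_finset_zero (hFzero n)
  have hFnorm : Summable fun p : ℕ × ℕ => ‖F p‖ := by
    refine (summable_prod_of_nonneg fun p => norm_nonneg _).2 ⟨fun n => ?_, ?_⟩
    · exact summable_of_ne_finset_zero (s := Finset.range (n + 1))
        (fun k hk => by rw [hFzero n k hk, norm_zero])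
    · apply hL.congr
      intro n
      rw [tsum_eq_sum (s := Finset.range (n + 1))
        (fun k hk => by rw [hFzero n k hk, norm_zero])]
      refine Finset.sum_congr rfl fun k hk => ?_
      simp only [Finset.mem_range, Nat.lt_succ_iff] at hk
      simp only [hFdef]
      rw [if_pos hk]
  have hFsum : Summable F := hFnorm.of_norm
  have hcol : ∀ k : ℕ, (∑' n : ℕ, F (n, k)) = ∑' m : ℕ, f (k + m) k := by
    intro k
    rw [← (add_right_injective k).tsum_eq (f := fun n => F (n, k)) ?_]
    · exact tsum_congr fun m => by simp [hFdef, Nat.le_add_right k m]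
    · intro n hn
      by_contra hr
      simp only [Set.mem_range, not_exists] at hr
      have hkn : k ≤ n := by
        by_contra hkn
        exact hn (by simp [hFdef, hkn])
      exact hr (n - k) (by omega)
  rw [tsum_congr hrow, ← Summable.tsum_prod' hFsum hrowinner,
    ← (Equiv.prodComm ℕ ℕ).tsum_eq F]
  have hG : Summable fun q : ℕ × ℕ => F (Equiv.prodComm ℕ ℕ q) :=
    ((Equiv.prodComm ℕ ℕ).summable_iff (f := F)).2 hFsum
  rw [Summable.tsum_prod' hG (fun k => (hFsum.prod_symm.prod_factor k).congr fun n => rfl)]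
  refine tsum_congr fun k => ?_
  have : (∑' n : ℕ, F (Equiv.prodComm ℕ ℕ (k, n))) = ∑' m : ℕ, f (k + m) k := by
    rw [← hcol k]; rfl
  rw [this]
  rw [F34, mul_assoc, mul_assoc, ← tsum_mul_right]
  refine tsum_congr fun m => ?_
  have := term_eq a c c' β x hc' ha hac k m
  simp only [hf]
  push_cast at this ⊢
  linear_combination this
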